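/- arXiv:1705.06242 — 8 statements merged into one kernel-verified Lean document; each statement's English description precedes it below -/
import Mathlib

section
/- Let B be a finite collection of more than 2^d axis-aligned cubes in R^d with pairwise disjoint interiors. Suppose a set C of points contains at least one point from each cube of B. Define, for cubes B1 and B2, that B1 is i-below B2 if the maximum i-th coordinate of B1 is at most the minimum i-th coordinate of B2. Then there exist cubes B', B, B'' in the collection and an index i with B' i-below B and B i-below B''; consequently C contains two points at Euclidean distance at least size(B) from each other, where size(B) is the edge length of B. -/
/-- An axis-aligned cube in `ℝ^d` with lower corner `c` and edge length `s`. -/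
def cube {d : ℕ} (c : EuclideanSpace ℝ (Fin d)) (s : ℝ) : Set (EuclideanSpace ℝ (Fin d)) :=
  {x | ∀ i, c i ≤ x i ∧ x i ≤ c i + s}

/-!
Record for each cube `B` the set of coordinates `i` for which some cube of the family is
`i`-below `B`; there are only `2^d` such sets, so two distinct cubes `B₁, B₂` share it.
Interior-disjoint cubes are separated in some coordinate `i`, say `B₁` is `i`-below `B₂`.
Then `i` belongs to the set of `B₂`, hence to that of `B₁`: some `B'` is `i`-below `B₁`,
and `B' ≺ᵢ B₁ ≺ᵢ B₂`. Points of `C` in `B'` and `B₂` are then at least `size(B₁)` apart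
in the `i`-th coordinate alone.
-/

open Set

section

variable {d : ℕ}

lemma mem_interior_cube {c x : EuclideanSpace ℝ (Fin d)} {s : ℝ}
    (hx : ∀ i, x i ∈ Ioo (c i) (c i + s)) : x ∈ interior (cube c s) := by
  have hopen : IsOpen (WithLp.ofLp ⁻¹' univ.pi fun i => Ioo (c i) (c i + s)) :=
    (isOpen_set_pi finite_univ fun _ _ => isOpen_Ioo).preimage (PiLp.continuous_ofLp 2 _)
  refine interior_maximal (fun y hy i => ?_) hopen fun i _ => hx i
  exact ⟨(hy i trivial).1.le, (hy i trivial).2.le⟩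

lemma exists_coord_separating_of_disjoint_interior {c c' : EuclideanSpace ℝ (Fin d)}
    {s s' : ℝ} (hs : 0 < s) (hs' : 0 < s')
    (h : Disjoint (interior (cube c s)) (interior (cube c' s'))) :
    ∃ i, c i + s ≤ c' i ∨ c' i + s' ≤ c i := by
  by_contra! hoverlap
  have hmeet : ∀ i, (Ioo (c i) (c i + s) ∩ Ioo (c' i) (c' i + s')).Nonempty := by
    intro i
    rw [Ioo_inter_Ioo, nonempty_Ioo, max_lt_iff, lt_min_iff, lt_min_iff]
    obtain ⟨h₁, h₂⟩ := hoverlap i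
    exact ⟨⟨by linarith, h₂⟩, ⟨h₁, by linarith⟩⟩
  choose x hx using hmeet
  exact h.ne_of_mem (mem_interior_cube (x := WithLp.toLp 2 x) fun i => (hx i).1)
    (mem_interior_cube (x := WithLp.toLp 2 x) fun i => (hx i).2) rfl

lemma le_dist_of_mem_cube_of_stacked {c₁ c₂ c₃ p q : EuclideanSpace ℝ (Fin d)}
    {s₁ s₂ s₃ : ℝ} {i : Fin d} (hp : p ∈ cube c₁ s₁) (hq : q ∈ cube c₃ s₃)
    (h₁₂ : c₁ i + s₁ ≤ c₂ i) (h₂₃ : c₂ i + s₂ ≤ c₃ i) : s₂ ≤ dist p q :=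
  calc s₂ ≤ q i - p i := by linarith [(hp i).2, (hq i).1]
    _ ≤ dist (p i) (q i) := by rw [Real.dist_eq, abs_sub_comm]; exact le_abs_self _
    _ ≤ dist p q := PiLp.dist_apply_le p q i

section Family

variable {ι : Type*} (c : ι → EuclideanSpace ℝ (Fin d)) (s : ι → ℝ)

def coordsBelow (j : ι) : Set (Fin d) :=
  {i | ∃ j', c j' i + s j' ≤ c j i}

variable {c s}

lemma exists_three_stacked_of_coordsBelow_eq {C : Set (EuclideanSpace ℝ (Fin d))}
    (hC : ∀ j, ∃ p ∈ C, p ∈ cube (c j) (s j)) {a b : ι}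
    (hab : coordsBelow c s a = coordsBelow c s b) {i : Fin d} (hi : c a i + s a ≤ c b i) :
    ∃ (j' j j'' : ι) (i : Fin d),
      (c j' i + s j' ≤ c j i) ∧ (c j i + s j ≤ c j'' i) ∧
      ∃ p ∈ C, ∃ q ∈ C, s j ≤ dist p q := by
  obtain ⟨j', hj'⟩ : i ∈ coordsBelow c s a := hab ▸ ⟨a, hi⟩
  obtain ⟨p, hpC, hp⟩ := hC j'
  obtain ⟨q, hqC, hq⟩ := hC b
  exact ⟨j', a, b, i, hj', hi, p, hpC, q, hqC, le_dist_of_mem_cube_of_stacked hp hq hj' hi⟩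

end Family

end

/-- Among more than `2^d` interior-disjoint axis-aligned cubes in `ℝ^d`,
if a set `C` contains a point in each cube, then there are cubes `B' ≺ᵢ B ≺ᵢ B''` for some
coordinate `i`, and consequently `C` contains two points at Euclidean distance at least
`size(B)` apart. -/
theorem three_stacked_cubes (d : ℕ) (ι : Type) [Fintype ι]
    (hcard : 2 ^ d < Fintype.card ι)
    (c : ι → EuclideanSpace ℝ (Fin d)) (s : ι → ℝ) (hs : ∀ j, 0 < s j)
    (hdisj : Pairwise fun j j' =>
      Disjoint (interior (cube (c j) (s j))) (interior (cube (c j') (s j'))))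
    (C : Set (EuclideanSpace ℝ (Fin d)))
    (hC : ∀ j, ∃ p ∈ C, p ∈ cube (c j) (s j)) :
    ∃ (j' j j'' : ι) (i : Fin d),
      (c j' i + s j' ≤ c j i) ∧ (c j i + s j ≤ c j'' i) ∧
      ∃ p ∈ C, ∃ q ∈ C, s j ≤ dist p q := by
  obtain ⟨a, b, hne, hab⟩ := Fintype.exists_ne_map_eq_of_card_lt (coordsBelow c s)
    (by simpa [Fintype.card_set] using hcard)
  obtain ⟨i, hi | hi⟩ := exists_coord_separating_of_disjoint_interior (hs a) (hs b) (hdisj hne)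
  · exact exists_three_stacked_of_coordsBelow_eq hC hab hi
  · exact exists_three_stacked_of_coordsBelow_eq hC hab.symm hi
end

section
/- Let cost be a (c, f(k))-regular cost function on clusterings of a finite point set, and let B be a cube cover of S = P ∩ Q with |B| > k·2^d. Then the optimal cost Opt_k(S) of a k-clustering of S satisfies Opt_k(S) >= c · min over B in B of size(B). -/
def IsClustering {d : ℕ} (S : Finset (EuclideanSpace ℝ (Fin d))) (k : ℕ)
    (𝒞 : Finset (Finset (EuclideanSpace ℝ (Fin d)))) : Prop :=
  𝒞.card ≤ k ∧ (∀ C ∈ 𝒞, C.Nonempty ∧ C ⊆ S) ∧ (∀ p ∈ S, ∃ C ∈ 𝒞, p ∈ C) ∧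
  (∀ C ∈ 𝒞, ∀ C' ∈ 𝒞, C ≠ C' → ∀ p, p ∈ C → p ∉ C')

noncomputable def Opt {d : ℕ} (cost : Finset (Finset (EuclideanSpace ℝ (Fin d))) → ℝ)
    (k : ℕ) (S : Finset (EuclideanSpace ℝ (Fin d))) : ℝ :=
  sInf {x | ∃ 𝒞, IsClustering S k 𝒞 ∧ cost 𝒞 = x}

open Set

lemma exists_forall_mem_Ico_of_dist_lt {n : Type*} [Fintype n]
    {C : Finset (EuclideanSpace ℝ n)} {σ : ℝ} (h : ∀ p ∈ C, ∀ q ∈ C, dist p q < σ) :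
    ∃ m : n → ℝ, ∀ q ∈ C, ∀ i, q i ∈ Ico (m i) (m i + σ) := by
  rcases C.eq_empty_or_nonempty with rfl | hC
  · simp
  refine ⟨fun i => C.inf' hC (· i), fun q hq i => ⟨Finset.inf'_le _ hq, ?_⟩⟩
  obtain ⟨q₀, hq₀, hmin⟩ := C.exists_mem_eq_inf' hC (· i)
  have hcoord : |q i - q₀ i| ≤ dist q q₀ :=
    (Real.dist_eq _ _).symm.trans_le (PiLp.dist_apply_le q q₀ i)
  simp only [hmin]
  linarith [le_abs_self (q i - q₀ i), h q hq q₀ hq₀]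

lemma Ioo_inter_Ioo_nonempty_of_same_side {σ a L a' L' x x' m : ℝ} (hL : σ ≤ L) (hL' : σ ≤ L')
    (hx : x ∈ Icc a (a + L)) (hx' : x' ∈ Icc a' (a' + L'))
    (hxm : x ∈ Ico m (m + σ)) (hx'm : x' ∈ Ico m (m + σ)) (hside : m ≤ a ↔ m ≤ a') :
    (Ioo a (a + L) ∩ Ioo a' (a' + L')).Nonempty := by
  rw [Ioo_inter_Ioo, nonempty_Ioo, max_lt_iff, lt_min_iff, lt_min_iff]
  obtain ⟨hxa, hxL⟩ := hx
  obtain ⟨hx'a, hx'L⟩ := hx'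
  obtain ⟨hmx, hxσ⟩ := hxm
  obtain ⟨hmx', hx'σ⟩ := hx'm
  by_cases hma : m ≤ a
  · have hma' := hside.mp hma
    refine ⟨⟨?_, ?_⟩, ?_, ?_⟩ <;> linarith
  · have hma' : a' < m := not_le.mp (mt hside.mpr hma)
    refine ⟨⟨?_, ?_⟩, ?_, ?_⟩ <;> linarith

lemma setOf_forall_mem_Ioo_subset_interior_cube {d : ℕ} (a : EuclideanSpace ℝ (Fin d)) (L : ℝ) :
    {x : EuclideanSpace ℝ (Fin d) | ∀ i, x i ∈ Ioo (a i) (a i + L)} ⊆ interior (cube a L) := by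
  refine interior_maximal (fun x hx i => Ioo_subset_Icc_self (hx i)) ?_
  have hopen : IsOpen (WithLp.ofLp ⁻¹' univ.pi fun i : Fin d => Ioo (a i) (a i + L)) :=
    (isOpen_set_pi finite_univ fun i _ => isOpen_Ioo).preimage (PiLp.continuous_ofLp 2 _)
  simpa only [preimage, mem_univ_pi] using hopen

lemma not_disjoint_interior_cube_of_same_side {d : ℕ} {σ L L' : ℝ}
    {a a' x x' : EuclideanSpace ℝ (Fin d)} {m : Fin d → ℝ} (hL : σ ≤ L) (hL' : σ ≤ L')
    (hx : x ∈ cube a L) (hx' : x' ∈ cube a' L')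
    (hxm : ∀ i, x i ∈ Ico (m i) (m i + σ)) (hx'm : ∀ i, x' i ∈ Ico (m i) (m i + σ))
    (hside : ∀ i, m i ≤ a i ↔ m i ≤ a' i) :
    ¬ Disjoint (interior (cube a L)) (interior (cube a' L')) := by
  choose z hz using fun i =>
    Ioo_inter_Ioo_nonempty_of_same_side hL hL' (hx i) (hx' i) (hxm i) (hx'm i) (hside i)
  exact not_disjoint_iff.mpr ⟨WithLp.toLp 2 z,
    setOf_forall_mem_Ioo_subset_interior_cube a L fun i => (hz i).1,
    setOf_forall_mem_Ioo_subset_interior_cube a' L' fun i => (hz i).2⟩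

lemma exists_le_dist_of_mul_two_pow_lt_card {d k : ℕ} {S : Finset (EuclideanSpace ℝ (Fin d))}
    {𝒞 : Finset (Finset (EuclideanSpace ℝ (Fin d)))} (hk : 𝒞.card ≤ k)
    (hcov : ∀ p ∈ S, ∃ C ∈ 𝒞, p ∈ C) {ι : Type*} [Fintype ι] (hcard : k * 2 ^ d < Fintype.card ι)
    {ctr : ι → EuclideanSpace ℝ (Fin d)} {s : ι → ℝ} {σ : ℝ} (hσ : ∀ j, σ ≤ s j)
    (hdisj : Pairwise fun j j' =>
      Disjoint (interior (cube (ctr j) (s j))) (interior (cube (ctr j') (s j'))))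
    (hpt : ∀ j, ∃ p ∈ S, p ∈ cube (ctr j) (s j)) :
    ∃ C ∈ 𝒞, ∃ p ∈ C, ∃ q ∈ C, σ ≤ dist p q := by
  by_contra! hsmall
  choose! m hm using fun C hC => exists_forall_mem_Ico_of_dist_lt (hsmall C hC)
  choose p hpS hpcube using hpt
  choose Cl hCl hpCl using fun j => hcov (p j) (hpS j)
  let label : ι → 𝒞 × (Fin d → Bool) :=
    fun j => (⟨Cl j, hCl j⟩, fun i => decide (m (Cl j) i ≤ ctr j i))
  have hlabels : Fintype.card (𝒞 × (Fin d → Bool)) < Fintype.card ι := by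
    simp only [Fintype.card_prod, Fintype.card_coe, Fintype.card_fun, Fintype.card_bool,
      Fintype.card_fin]
    exact (Nat.mul_le_mul_right _ hk).trans_lt hcard
  obtain ⟨j, j', hne, hsame⟩ := Fintype.exists_ne_map_eq_of_card_lt label hlabels
  simp only [label, Prod.mk.injEq, Subtype.mk.injEq, funext_iff, decide_eq_decide] at hsame
  obtain ⟨hCC, hside⟩ := hsame
  exact not_disjoint_interior_cube_of_same_side (hσ j) (hσ j') (hpcube j) (hpcube j')
    (hm _ (hCl j) _ (hpCl j)) (hCC ▸ hm _ (hCl j') _ (hpCl j')) (hCC ▸ hside) (hdisj hne)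

lemma isClustering_singleton {d k : ℕ} {S : Finset (EuclideanSpace ℝ (Fin d))}
    (hS : S.Nonempty) (hk : 1 ≤ k) : IsClustering S k {S} := by
  refine ⟨by simpa using hk, ?_, fun p hp => ⟨S, Finset.mem_singleton_self S, hp⟩, ?_⟩
  · simp [hS]
  · simp

lemma le_Opt_of_forall_le {d k : ℕ} {cost : Finset (Finset (EuclideanSpace ℝ (Fin d))) → ℝ}
    {S : Finset (EuclideanSpace ℝ (Fin d))} {b : ℝ} (hex : ∃ 𝒞, IsClustering S k 𝒞)
    (hle : ∀ 𝒞, IsClustering S k 𝒞 → b ≤ cost 𝒞) : b ≤ Opt cost k S := by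
  obtain ⟨𝒞, h𝒞⟩ := hex
  exact le_csInf ⟨cost 𝒞, 𝒞, h𝒞, rfl⟩ fun _ ⟨𝒞', h𝒞', hx⟩ => hx ▸ hle 𝒞' h𝒞'

theorem opt_lower_bound_from_cube_cover_general (d k : ℕ) (hk : 1 ≤ k) (c : ℝ) (hc : 0 < c)
    (cost : Finset (Finset (EuclideanSpace ℝ (Fin d))) → ℝ)
    (hsens : ∀ 𝒞 : Finset (Finset (EuclideanSpace ℝ (Fin d))),
      ∀ C ∈ 𝒞, ∀ p ∈ C, ∀ q ∈ C, c * dist p q ≤ cost 𝒞)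
    (S : Finset (EuclideanSpace ℝ (Fin d)))
    (ι : Type) [Fintype ι] (hcard : k * 2 ^ d < Fintype.card ι)
    (ctr : ι → EuclideanSpace ℝ (Fin d)) (s : ι → ℝ)
    (hdisj : Pairwise fun j j' =>
      Disjoint (interior (cube (ctr j) (s j))) (interior (cube (ctr j') (s j'))))
    (hpt : ∀ j, ∃ p ∈ S, p ∈ cube (ctr j) (s j)) :
    ∀ j0 : ι, (∀ j, s j0 ≤ s j) → c * s j0 ≤ Opt cost k S := by
  intro j0 hj0
  obtain ⟨p₀, hp₀S, -⟩ := hpt j0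
  refine le_Opt_of_forall_le ⟨{S}, isClustering_singleton ⟨p₀, hp₀S⟩ hk⟩ fun 𝒞 h𝒞 => ?_
  obtain ⟨C, hC, p, hp, q, hq, hpq⟩ :=
    exists_le_dist_of_mul_two_pow_lt_card h𝒞.1 h𝒞.2.2.1 hcard hj0 hdisj hpt
  calc c * s j0 ≤ c * dist p q := by gcongr
    _ ≤ cost 𝒞 := hsens 𝒞 C hC p hp q hq

/-- For a diameter-sensitive (regular) nonnegative cost function and
a cube cover `B` of `S` with `|B| > k·2^d`, one has `Opt_k(S) ≥ c · min_{B ∈ 𝓑} size(B)`. -/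
theorem opt_lower_bound_from_cube_cover (d k : ℕ) (hk : 1 ≤ k) (c : ℝ) (hc : 0 < c)
    (cost : Finset (Finset (EuclideanSpace ℝ (Fin d))) → ℝ)
    (hcost0 : ∀ 𝒞, 0 ≤ cost 𝒞)
    (hsens : ∀ 𝒞 : Finset (Finset (EuclideanSpace ℝ (Fin d))),
      ∀ C ∈ 𝒞, ∀ p ∈ C, ∀ q ∈ C, c * dist p q ≤ cost 𝒞)
    (S : Finset (EuclideanSpace ℝ (Fin d)))
    (ι : Type) [Fintype ι] (hcard : k * 2 ^ d < Fintype.card ι)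
    (ctr : ι → EuclideanSpace ℝ (Fin d)) (s : ι → ℝ) (hs : ∀ j, 0 < s j)
    (hdisj : Pairwise fun j j' =>
      Disjoint (interior (cube (ctr j) (s j))) (interior (cube (ctr j') (s j'))))
    (hpt : ∀ j, ∃ p ∈ S, p ∈ cube (ctr j) (s j))
    (hcover : ∀ p ∈ S, ∃ j, p ∈ cube (ctr j) (s j)) :
    ∀ j0 : ι, (∀ j, s j0 ≤ s j) → c * s j0 ≤ Opt cost k S :=
  opt_lower_bound_from_cube_cover_general d k hk c hc cost hsens S ι hcard ctr s hdisj hpt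
end

section
/- The cost function of the rectilinear k-center problem in R^d, defined as cost(C) = max over clusters C of radius_∞(C) where radius_∞(C) is half the side length of a minimal enclosing axis-aligned cube of C, is (1/(2·sqrt(d)), 1)-regular: it satisfies cost(C) >= (1/(2·sqrt(d)))·max over clusters of the Euclidean diameter, and for any weak r-packing R of a set S', Opt_k(R) <= Opt_k(S') <= Opt_k(R) + r. -/
/-- The `L∞`-radius of a finite point set: half the edge length of a smallest
enclosing axis-aligned cube. -/
noncomputable def radiusLinf {d : ℕ} (C : Finset (EuclideanSpace ℝ (Fin d))) : ℝ :=
  sSup {x | ∃ p ∈ C, ∃ q ∈ C, ∃ i, x = |p i - q i|} / 2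

/-- The cost of a clustering in the rectilinear `k`-center problem: the maximum
`L∞`-radius of a cluster. -/
noncomputable def costLinfMax {d : ℕ} (𝒞 : Finset (Finset (EuclideanSpace ℝ (Fin d)))) : ℝ :=
  sSup {x | ∃ C ∈ 𝒞, x = radiusLinf C}

/-!
Each coordinate gap |p i - q i| within a cluster is at most twice its `L∞`-radius, and the
Euclidean distance is at most `√d` times the largest coordinate gap; this gives diameter
sensitivity. For the expansion property, restricting a clustering of `S'` to `R`
cannot increase any radius, while conversely every point of `S'` can join the cluster of a
point of `R` at distance at most `r`, which by the triangle inequality in each coordinate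
enlarges every radius by at most `r`.
-/

open Finset

variable {d : ℕ}

lemma coordGaps_finite (C : Finset (EuclideanSpace ℝ (Fin d))) :
    {x : ℝ | ∃ p ∈ C, ∃ q ∈ C, ∃ i, x = |p i - q i|}.Finite := by
  refine ((C.finite_toSet.prod (C.finite_toSet.prod Set.finite_univ)).image
    fun t : EuclideanSpace ℝ (Fin d) × EuclideanSpace ℝ (Fin d) × Fin d =>
      |t.1 t.2.2 - t.2.1 t.2.2|).subset ?_
  rintro x ⟨p, hp, q, hq, i, rfl⟩
  exact ⟨⟨p, q, i⟩, ⟨hp, hq, trivial⟩, rfl⟩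

lemma radiusLinf_nonneg (C : Finset (EuclideanSpace ℝ (Fin d))) : 0 ≤ radiusLinf C := by
  refine div_nonneg (Real.sSup_nonneg ?_) zero_le_two
  rintro x ⟨p, -, q, -, i, rfl⟩
  exact abs_nonneg _

lemma abs_sub_le_two_mul_radiusLinf {C : Finset (EuclideanSpace ℝ (Fin d))}
    {p q : EuclideanSpace ℝ (Fin d)} (hp : p ∈ C) (hq : q ∈ C) (i : Fin d) :
    |p i - q i| ≤ 2 * radiusLinf C := by
  rw [radiusLinf, mul_div_cancel₀ _ two_ne_zero]
  exact le_csSup (coordGaps_finite C).bddAbove ⟨p, hp, q, hq, i, rfl⟩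

lemma radiusLinf_le_of_forall {C : Finset (EuclideanSpace ℝ (Fin d))} {b : ℝ} (hb : 0 ≤ b)
    (h : ∀ p ∈ C, ∀ q ∈ C, ∀ i, |p i - q i| ≤ 2 * b) : radiusLinf C ≤ b := by
  rw [radiusLinf, div_le_iff₀' zero_lt_two]
  refine Real.sSup_le ?_ (by positivity)
  rintro x ⟨p, hp, q, hq, i, rfl⟩
  exact h p hp q hq i

lemma radiusLinf_mono {C D : Finset (EuclideanSpace ℝ (Fin d))} (h : D ⊆ C) :
    radiusLinf D ≤ radiusLinf C :=
  radiusLinf_le_of_forall (radiusLinf_nonneg C) fun _ hp _ hq i =>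
    abs_sub_le_two_mul_radiusLinf (h hp) (h hq) i

lemma radiusLinf_le_add_of_forall_exists_dist_le {C D : Finset (EuclideanSpace ℝ (Fin d))}
    {r : ℝ} (hr : 0 ≤ r) (hD : ∀ p ∈ D, ∃ a ∈ C, dist p a ≤ r) :
    radiusLinf D ≤ radiusLinf C + r := by
  refine radiusLinf_le_of_forall (add_nonneg (radiusLinf_nonneg C) hr) fun p hp q hq i => ?_
  obtain ⟨a, ha, hpa⟩ := hD p hp
  obtain ⟨b, hb, hqb⟩ := hD q hq
  have hpa' : |p i - a i| ≤ r := (PiLp.dist_apply_le p a i).trans hpa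
  have hqb' : |q i - b i| ≤ r := (PiLp.dist_apply_le q b i).trans hqb
  have hab := abs_sub_le_two_mul_radiusLinf ha hb i
  have hpq := abs_sub_le (p i) (a i) (q i)
  have haq := abs_sub_le (a i) (b i) (q i)
  rw [abs_sub_comm (b i)] at haq
  linarith

lemma radiusLinf_le_costLinfMax {𝒞 : Finset (Finset (EuclideanSpace ℝ (Fin d)))}
    {C : Finset (EuclideanSpace ℝ (Fin d))} (hC : C ∈ 𝒞) : radiusLinf C ≤ costLinfMax 𝒞 := by
  refine le_csSup ((𝒞.finite_toSet.image radiusLinf).subset ?_).bddAbove ⟨C, hC, rfl⟩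
  rintro x ⟨C, hC, rfl⟩
  exact ⟨C, hC, rfl⟩

lemma costLinfMax_nonneg (𝒞 : Finset (Finset (EuclideanSpace ℝ (Fin d)))) :
    0 ≤ costLinfMax 𝒞 := by
  refine Real.sSup_nonneg ?_
  rintro x ⟨C, -, rfl⟩
  exact radiusLinf_nonneg C

lemma costLinfMax_le_of_forall {𝒞 : Finset (Finset (EuclideanSpace ℝ (Fin d)))} {b : ℝ}
    (hb : 0 ≤ b) (h : ∀ C ∈ 𝒞, radiusLinf C ≤ b) : costLinfMax 𝒞 ≤ b := by
  refine Real.sSup_le ?_ hb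
  rintro x ⟨C, hC, rfl⟩
  exact h C hC

lemma dist_le_sqrt_card_mul {ι : Type*} [Fintype ι] {x y : EuclideanSpace ℝ ι} {b : ℝ}
    (hb : 0 ≤ b) (h : ∀ i, |x i - y i| ≤ b) : dist x y ≤ √(Fintype.card ι) * b := by
  calc dist x y = √(∑ i, dist (x i) (y i) ^ 2) := EuclideanSpace.dist_eq x y
    _ ≤ √(∑ _i : ι, b ^ 2) := by
      gcongr with i
      exact (Real.dist_eq _ _).trans_le (h i)
    _ = √(Fintype.card ι) * b := by
      rw [sum_const, card_univ, nsmul_eq_mul, Real.sqrt_mul (Nat.cast_nonneg _), Real.sqrt_sq hb]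

lemma mul_dist_le_costLinfMax {𝒞 : Finset (Finset (EuclideanSpace ℝ (Fin d)))}
    {C : Finset (EuclideanSpace ℝ (Fin d))} (hC : C ∈ 𝒞) {p q : EuclideanSpace ℝ (Fin d)}
    (hp : p ∈ C) (hq : q ∈ C) : 1 / (2 * √d) * dist p q ≤ costLinfMax 𝒞 := by
  have hdist : dist p q ≤ √d * (2 * radiusLinf C) := by
    simpa using dist_le_sqrt_card_mul (by linarith [radiusLinf_nonneg C])
      (abs_sub_le_two_mul_radiusLinf hp hq)
  refine le_trans ?_ (radiusLinf_le_costLinfMax hC)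
  -- for `d = 0` the factor `1 / (2 * √d)` is the junk value `0`
  rcases (Real.sqrt_nonneg (d : ℝ)).eq_or_lt with hd | hd
  · simp [← hd, radiusLinf_nonneg]
  · rw [one_div_mul_eq_div, div_le_iff₀ (by positivity)]
    linarith

lemma exists_isClustering (S : Finset (EuclideanSpace ℝ (Fin d))) {k : ℕ} (hk : 1 ≤ k) :
    ∃ 𝒞, IsClustering S k 𝒞 := by
  rcases S.eq_empty_or_nonempty with rfl | hS
  · exact ⟨∅, by simp [IsClustering]⟩
  · refine ⟨{S}, by simpa using hk, ?_, fun p hp => ⟨S, mem_singleton_self S, hp⟩, ?_⟩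
    · simp [hS]
    · simp

lemma opt_le_opt_add {cost : Finset (Finset (EuclideanSpace ℝ (Fin d))) → ℝ}
    (hcost : ∀ 𝒞, 0 ≤ cost 𝒞) {k : ℕ} {S T : Finset (EuclideanSpace ℝ (Fin d))} {c : ℝ}
    (hT : ∃ 𝒞, IsClustering T k 𝒞)
    (h : ∀ 𝒞, IsClustering T k 𝒞 → ∃ 𝒞', IsClustering S k 𝒞' ∧ cost 𝒞' ≤ cost 𝒞 + c) :
    Opt cost k S ≤ Opt cost k T + c := by
  obtain ⟨𝒞₀, h𝒞₀⟩ := hT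
  rw [← sub_le_iff_le_add, Opt]
  refine le_csInf ⟨_, 𝒞₀, h𝒞₀, rfl⟩ ?_
  rintro _ ⟨𝒞, h𝒞, rfl⟩
  obtain ⟨𝒞', h𝒞', hle⟩ := h 𝒞 h𝒞
  rw [sub_le_iff_le_add]
  have hbdd : BddBelow {x | ∃ 𝒞, IsClustering S k 𝒞 ∧ cost 𝒞 = x} :=
    ⟨0, by rintro _ ⟨𝒞, -, rfl⟩; exact hcost 𝒞⟩
  exact (csInf_le hbdd ⟨𝒞', h𝒞', rfl⟩).trans hle

section Clustering

variable {k : ℕ} {S R : Finset (EuclideanSpace ℝ (Fin d))}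
  {𝒞 : Finset (Finset (EuclideanSpace ℝ (Fin d)))}

lemma IsClustering.restrict (h : IsClustering S k 𝒞) (hRS : R ⊆ S) :
    IsClustering R k ((𝒞.image (· ∩ R)).filter Finset.Nonempty) := by
  obtain ⟨hcard, hparts, hcover, hdisj⟩ := h
  refine ⟨(card_filter_le _ _).trans (card_image_le.trans hcard), ?_, ?_, ?_⟩
  · simp only [mem_filter, mem_image]
    rintro _ ⟨⟨C, -, rfl⟩, hne⟩
    exact ⟨hne, inter_subset_right⟩
  · intro p hp
    obtain ⟨C, hC, hpC⟩ := hcover p (hRS hp)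
    exact ⟨C ∩ R, mem_filter.2 ⟨mem_image_of_mem _ hC, p, mem_inter.2 ⟨hpC, hp⟩⟩,
      mem_inter.2 ⟨hpC, hp⟩⟩
  · simp only [mem_filter, mem_image]
    rintro _ ⟨⟨C, hC, rfl⟩, -⟩ _ ⟨⟨C', hC', rfl⟩, -⟩ hne p hp hp'
    exact hdisj C hC C' hC' (by rintro rfl; exact hne rfl) p (mem_inter.1 hp).1
      (mem_inter.1 hp').1

lemma IsClustering.comap (h : IsClustering R k 𝒞) (hRS : R ⊆ S)
    {σ : EuclideanSpace ℝ (Fin d) → EuclideanSpace ℝ (Fin d)} (hσ : ∀ p ∈ S, σ p ∈ R)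
    (hfix : ∀ q ∈ R, σ q = q) :
    IsClustering S k (𝒞.image fun C => S.filter (σ · ∈ C)) := by
  obtain ⟨hcard, hparts, hcover, hdisj⟩ := h
  refine ⟨card_image_le.trans hcard, ?_, ?_, ?_⟩
  · simp only [mem_image]
    rintro _ ⟨C, hC, rfl⟩
    obtain ⟨q, hq⟩ := (hparts C hC).1
    have hqR := (hparts C hC).2 hq
    exact ⟨⟨q, mem_filter.2 ⟨hRS hqR, by rwa [hfix q hqR]⟩⟩, filter_subset _ _⟩
  · intro p hp
    obtain ⟨C, hC, hσC⟩ := hcover (σ p) (hσ p hp)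
    exact ⟨_, mem_image_of_mem _ hC, mem_filter.2 ⟨hp, hσC⟩⟩
  · simp only [mem_image]
    rintro _ ⟨C, hC, rfl⟩ _ ⟨C', hC', rfl⟩ hne p hp hp'
    exact hdisj C hC C' hC' (by rintro rfl; exact hne rfl) (σ p) (mem_filter.1 hp).2
      (mem_filter.1 hp').2

end Clustering

lemma exists_retraction_of_forall_exists_dist_le {X : Type*} [PseudoMetricSpace X]
    {S R : Finset X} {r : ℝ} (hr : 0 ≤ r) (hpack : ∀ p ∈ S, ∃ q ∈ R, dist p q ≤ r) :
    ∃ σ : X → X, (∀ p ∈ S, σ p ∈ R ∧ dist p (σ p) ≤ r) ∧ ∀ q ∈ R, σ q = q := by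
  have hσ : ∀ p, ∃ q, (p ∈ S → q ∈ R ∧ dist p q ≤ r) ∧ (p ∈ R → q = p) := fun p => by
    by_cases hpR : p ∈ R
    · exact ⟨p, fun _ => ⟨hpR, by simpa using hr⟩, fun _ => rfl⟩
    by_cases hpS : p ∈ S
    · obtain ⟨q, hq, hpq⟩ := hpack p hpS
      exact ⟨q, fun _ => ⟨hq, hpq⟩, fun h => absurd h hpR⟩
    · exact ⟨p, fun h => absurd h hpS, fun _ => rfl⟩
  choose σ hσ using hσ
  exact ⟨σ, fun p hp => (hσ p).1 hp, fun q hq => (hσ q).2 hq⟩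

lemma costLinfMax_restrict_le (𝒞 : Finset (Finset (EuclideanSpace ℝ (Fin d))))
    (R : Finset (EuclideanSpace ℝ (Fin d))) :
    costLinfMax ((𝒞.image (· ∩ R)).filter Finset.Nonempty) ≤ costLinfMax 𝒞 := by
  refine costLinfMax_le_of_forall (costLinfMax_nonneg 𝒞) ?_
  simp only [mem_filter, mem_image]
  rintro _ ⟨⟨C, hC, rfl⟩, -⟩
  exact (radiusLinf_mono inter_subset_left).trans (radiusLinf_le_costLinfMax hC)

lemma costLinfMax_comap_le {𝒞 : Finset (Finset (EuclideanSpace ℝ (Fin d)))}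
    {S : Finset (EuclideanSpace ℝ (Fin d))}
    {σ : EuclideanSpace ℝ (Fin d) → EuclideanSpace ℝ (Fin d)} {r : ℝ} (hr : 0 ≤ r) (hσ : ∀ p ∈ S, dist p (σ p) ≤ r) :
    costLinfMax (𝒞.image fun C => S.filter (σ · ∈ C)) ≤ costLinfMax 𝒞 + r := by
  refine costLinfMax_le_of_forall (add_nonneg (costLinfMax_nonneg 𝒞) hr) ?_
  simp only [mem_image]
  rintro _ ⟨C, hC, rfl⟩
  refine (radiusLinf_le_add_of_forall_exists_dist_le hr fun p hp => ?_).trans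
    (add_le_add (radiusLinf_le_costLinfMax hC) le_rfl)
  obtain ⟨hpS, hσC⟩ := mem_filter.1 hp
  exact ⟨σ p, hσC, hσ p hpS⟩

lemma opt_costLinfMax_mono {S R : Finset (EuclideanSpace ℝ (Fin d))} (hRS : R ⊆ S) {k : ℕ}
    (hk : 1 ≤ k) : Opt costLinfMax k R ≤ Opt costLinfMax k S := by
  simpa only [add_zero] using opt_le_opt_add costLinfMax_nonneg (exists_isClustering S hk)
    fun 𝒞 h𝒞 => ⟨_, h𝒞.restrict hRS, (costLinfMax_restrict_le 𝒞 R).trans_eq (add_zero _).symm⟩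

lemma opt_costLinfMax_le_add {S R : Finset (EuclideanSpace ℝ (Fin d))} (hRS : R ⊆ S) {r : ℝ}
    (hr : 0 ≤ r) (hpack : ∀ p ∈ S, ∃ q ∈ R, dist p q ≤ r) {k : ℕ} (hk : 1 ≤ k) :
    Opt costLinfMax k S ≤ Opt costLinfMax k R + r := by
  obtain ⟨σ, hσ, hfix⟩ := exists_retraction_of_forall_exists_dist_le hr hpack
  exact opt_le_opt_add costLinfMax_nonneg (exists_isClustering R hk) fun 𝒞 h𝒞 =>
    ⟨_, h𝒞.comap hRS (fun p hp => (hσ p hp).1) hfix,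
      costLinfMax_comap_le hr fun p hp => (hσ p hp).2⟩

theorem rectilinear_kcenter_regular_general (d : ℕ) :
    (∀ 𝒞 : Finset (Finset (EuclideanSpace ℝ (Fin d))),
      ∀ C ∈ 𝒞, ∀ p ∈ C, ∀ q ∈ C,
        (1 / (2 * Real.sqrt d)) * dist p q ≤ costLinfMax 𝒞) ∧
    (∀ (S' R : Finset (EuclideanSpace ℝ (Fin d))) (r : ℝ), 0 ≤ r → R ⊆ S' →
      (∀ p ∈ S', ∃ q ∈ R, dist p q ≤ r) →
      ∀ k : ℕ, 2 ≤ k →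
        Opt costLinfMax k R ≤ Opt costLinfMax k S' ∧
        Opt costLinfMax k S' ≤ Opt costLinfMax k R + r) :=
  ⟨fun _ _ hC _ hp _ hq => mul_dist_le_costLinfMax hC hp hq,
    fun _ _ _ hr hRS hpack _ hk =>
      ⟨opt_costLinfMax_mono hRS (by omega), opt_costLinfMax_le_add hRS hr hpack (by omega)⟩⟩

/-- The rectilinear `k`-center cost function is
`(1/(2√d), 1)`-regular: diameter-sensitivity with constant `1/(2√d)`, and the
expansion property `Opt_k(R) ≤ Opt_k(S') ≤ Opt_k(R) + r` for weak `r`-packings. -/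
theorem rectilinear_kcenter_regular (d : ℕ) (hd : 0 < d) :
    (∀ 𝒞 : Finset (Finset (EuclideanSpace ℝ (Fin d))),
      ∀ C ∈ 𝒞, ∀ p ∈ C, ∀ q ∈ C,
        (1 / (2 * Real.sqrt d)) * dist p q ≤ costLinfMax 𝒞) ∧
    (∀ (S' R : Finset (EuclideanSpace ℝ (Fin d))) (r : ℝ), 0 ≤ r → R ⊆ S' →
      (∀ p ∈ S', ∃ q ∈ R, dist p q ≤ r) →
      ∀ k : ℕ, 2 ≤ k →
        Opt costLinfMax k R ≤ Opt costLinfMax k S' ∧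
        Opt costLinfMax k S' ≤ Opt costLinfMax k R + r) :=
  rectilinear_kcenter_regular_general d
end

section
/- Let S be a finite set of points in R contained in an interval Q = [x, x'] with x, x' ∈ S, and let k >= 2. Let s_1, ..., s_{k-1} be the points partitioning Q into k equal-length subintervals. Then at least one s_i is a fair split point: there exists an optimal covering of S by at most k intervals of equal minimal length L = Opt_k(S) such that s_i is not in the interior of any of the intervals, and exactly i of the intervals lie to the left of s_i. -/
/-- The minimum length `L` such that `S ⊂ ℝ` can be covered by (at most) `k`
closed intervals of length `L`. -/
noncomputable def OptLen (k : ℕ) (S : Finset ℝ) : ℝ :=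
  sInf {L | 0 ≤ L ∧ ∃ t : Fin k → ℝ, ∀ p ∈ S, ∃ j, t j ≤ p ∧ p ≤ t j + L}

/-!
Let `L = OptLen k S` and let `g 0 = x < g 1 < ⋯` be the left endpoints of the greedy cover by
intervals of length `L`, each starting at the leftmost point of `S` not yet covered. Consecutive
endpoints are more than `L` apart, so `g 0, …, g k` cannot all lie in `S`: they would need `k + 1`
intervals of any length below their least gap, and some such length is feasible. Hence the first
`k` greedy intervals already form an optimal cover. Since `L ≤ (x' - x) / k`, the endpoints cannot
satisfy both `g 1 ≤ s 1` (which forces `L < (x' - x) / k`) and `g (k - 1) ≤ s (k - 1)` (which then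
makes the last interval end before `x'`). At the first `i` with `s i < g i`, the interval `i - 1`
ends at `g (i - 1) + L ≤ s (i - 1) + L ≤ s i`, so `s i` is a fair split point.
-/

open Finset

def Covers {ι : Type*} (S : Finset ℝ) (L : ℝ) (t : ι → ℝ) : Prop :=
  ∀ p ∈ S, ∃ j, t j ≤ p ∧ p ≤ t j + L

theorem Covers.card_le {ι κ : Type*} [LinearOrder ι] [Fintype ι] [Fintype κ] {S : Finset ℝ}
    {L : ℝ} {t : κ → ℝ} (ht : Covers S L t) {v : ι → ℝ} (hv : ∀ i, v i ∈ S)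
    (hsep : ∀ i j, i < j → v i + L < v j) : Fintype.card ι ≤ Fintype.card κ := by
  choose c hc using fun i => ht (v i) (hv i)
  have hsame : ∀ i j, c i = c j → ¬ i < j := fun i j hij hlt => by
    have := hsep i j hlt
    have := hc i
    have := hc j
    rw [hij] at *
    linarith
  exact Fintype.card_le_of_injective c fun i j hij =>
    le_antisymm (not_lt.1 (hsame j i hij.symm)) (not_lt.1 (hsame i j hij))

theorem optLen_nonneg (k : ℕ) (S : Finset ℝ) : 0 ≤ OptLen k S :=
  Real.sInf_nonneg fun _ h => h.1

section OptLen

variable {k : ℕ} {S : Finset ℝ}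

theorem optLen_le {L : ℝ} {t : Fin k → ℝ} (ht : Covers S L t) (hL : 0 ≤ L) : OptLen k S ≤ L :=
  csInf_le ⟨0, fun _ h => h.1⟩ ⟨hL, t, ht⟩

theorem exists_covers_lt_of_optLen_lt {L₀ m : ℝ} {t₀ : Fin k → ℝ} (ht₀ : Covers S L₀ t₀)
    (hL₀ : 0 ≤ L₀) (h : OptLen k S < m) : ∃ L < m, ∃ t : Fin k → ℝ, Covers S L t := by
  obtain ⟨L, ⟨-, t, ht⟩, hLm⟩ := exists_lt_of_csInf_lt
    (s := {L | 0 ≤ L ∧ ∃ t : Fin k → ℝ, Covers S L t}) ⟨L₀, hL₀, t₀, ht₀⟩ h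
  exact ⟨L, hLm, t, ht⟩

end OptLen

noncomputable def nextAbove (S : Finset ℝ) (b : ℝ) : ℝ :=
  if h : {p ∈ S | b < p}.Nonempty then {p ∈ S | b < p}.min' h else b + 1

section NextAbove

variable {S : Finset ℝ} {b p : ℝ}

theorem lt_nextAbove : b < nextAbove S b := by
  unfold nextAbove
  split_ifs with h
  · exact (mem_filter.1 (min'_mem _ h)).2
  · exact lt_add_one b

theorem nextAbove_le (hp : p ∈ S) (hbp : b < p) : nextAbove S b ≤ p := by
  have hmem : p ∈ {p ∈ S | b < p} := mem_filter.2 ⟨hp, hbp⟩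
  rw [nextAbove, dif_pos ⟨p, hmem⟩]
  exact min'_le _ _ hmem

theorem nextAbove_mem_of_le (hp : p ∈ S) (h : nextAbove S b ≤ p) : nextAbove S b ∈ S := by
  unfold nextAbove at *
  split_ifs at * with hne
  · exact (mem_filter.1 (min'_mem _ hne)).1
  · exact absurd ⟨p, mem_filter.2 ⟨hp, by linarith⟩⟩ hne

end NextAbove

noncomputable def greedy (S : Finset ℝ) (a L : ℝ) : ℕ → ℝ
  | 0 => a
  | j + 1 => nextAbove S (greedy S a L j + L)

section Greedy

variable {S : Finset ℝ} {a L : ℝ}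

theorem add_lt_greedy_succ (j : ℕ) : greedy S a L j + L < greedy S a L (j + 1) :=
  lt_nextAbove

theorem greedy_monotone (hL : 0 ≤ L) : Monotone (greedy S a L) :=
  monotone_nat_of_le_succ fun j => by linarith [add_lt_greedy_succ (S := S) (a := a) (L := L) j]

theorem add_mul_le_greedy : ∀ j : ℕ, a + j * L ≤ greedy S a L j
  | 0 => by simp [greedy]
  | j + 1 => by
    have := add_mul_le_greedy j
    have := add_lt_greedy_succ (S := S) (a := a) (L := L) j
    push_cast
    linarith

theorem greedy_mem_of_le (ha : a ∈ S) {p : ℝ} (hp : p ∈ S) :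
    ∀ {j : ℕ}, greedy S a L j ≤ p → greedy S a L j ∈ S
  | 0, _ => ha
  | _ + 1, h => nextAbove_mem_of_le hp h

theorem exists_greedy_cover {p : ℝ} {N : ℕ} (hp : p ∈ S) (hap : a ≤ p)
    (hpN : p < greedy S a L N) : ∃ j < N, greedy S a L j ≤ p ∧ p ≤ greedy S a L j + L := by
  classical
  have hex : ∃ n, p < greedy S a L n := ⟨N, hpN⟩
  obtain ⟨j, hj⟩ : ∃ j, Nat.find hex = j + 1 :=
    Nat.exists_eq_succ_of_ne_zero fun h => (Nat.find_spec hex).not_ge (h ▸ hap)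
  have hlt : p < greedy S a L (j + 1) := hj ▸ Nat.find_spec hex
  refine ⟨j, by have := Nat.find_min' hex hpN; omega,
    not_lt.1 (Nat.find_min hex (by omega)), ?_⟩
  by_contra! h
  exact (nextAbove_le hp h).not_gt hlt

theorem covers_greedy {k : ℕ} (ha : ∀ p ∈ S, a ≤ p) (hk : ∀ p ∈ S, p < greedy S a L k) :
    Covers S L fun j : Fin k => greedy S a L j := fun p hp =>
  let ⟨j, hjk, hj⟩ := exists_greedy_cover hp (ha p hp) (hk p hp)
  ⟨⟨j, hjk⟩, hj⟩

end Greedy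

theorem covers_greedy_div {k : ℕ} (hk : k ≠ 0) {S : Finset ℝ} {x x' : ℝ}
    (hS : ∀ p ∈ S, x ≤ p ∧ p ≤ x') :
    Covers S ((x' - x) / k) fun j : Fin k => greedy S x ((x' - x) / k) j := by
  refine covers_greedy (fun p hp => (hS p hp).1) fun p hp => ?_
  obtain ⟨m, rfl⟩ := Nat.exists_eq_succ_of_ne_zero hk
  have h1 := add_mul_le_greedy (S := S) (a := x) (L := (x' - x) / (m + 1 : ℕ)) m
  have h2 := add_lt_greedy_succ (S := S) (a := x) (L := (x' - x) / (m + 1 : ℕ)) m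
  have hx' : x + m * ((x' - x) / (m + 1 : ℕ)) + (x' - x) / (m + 1 : ℕ) = x' := by
    push_cast
    field_simp
    ring
  linarith [(hS p hp).2]

theorem lt_greedy_optLen {k : ℕ} {S : Finset ℝ} {a L₀ p : ℝ} {t₀ : Fin k → ℝ} (ha : a ∈ S)
    (ht₀ : Covers S L₀ t₀) (hL₀ : 0 ≤ L₀) (hp : p ∈ S) : p < greedy S a (OptLen k S) k := by
  set g := greedy S a (OptLen k S)
  by_contra! hkp
  have hmono : Monotone g := greedy_monotone (optLen_nonneg k S)
  obtain ⟨j₀, -, hj₀⟩ :=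
    (range (k + 1)).exists_min_image (fun j => g (j + 1) - g j) nonempty_range_add_one
  have hgap : OptLen k S < g (j₀ + 1) - g j₀ := by
    linarith [add_lt_greedy_succ (S := S) (a := a) (L := OptLen k S) j₀]
  obtain ⟨L, hL, t, ht⟩ := exists_covers_lt_of_optLen_lt ht₀ hL₀ hgap
  have hcard := ht.card_le (v := fun i : Fin (k + 1) => g i)
    (fun i => greedy_mem_of_le ha hp ((hmono (Nat.le_of_lt_succ i.2)).trans hkp))
    fun i j hij => by
      have := hj₀ i (mem_range.2 i.2)
      have := hmono (Nat.succ_le_of_lt hij)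
      linarith
  simp only [Fintype.card_fin] at hcard
  omega

theorem exists_first_crossing {g s : ℕ → ℝ} {L d : ℝ} {n : ℕ} (hLd : L ≤ d) (h0 : g 0 = s 0)
    (hs : ∀ i, s (i + 1) = s i + d) (hg1 : g 0 + L < g 1) (hn : 1 ≤ n)
    (hend : s (n + 1) ≤ g n + L) : ∃ i < n, g i + L ≤ s (i + 1) ∧ s (i + 1) < g (i + 1) := by
  classical
  have hex : ∃ i, i ≤ n ∧ s i < g i := by
    by_contra! h
    linarith [h 1 hn, h n le_rfl, hs 0, hs n]
  obtain ⟨i, hi⟩ : ∃ i, Nat.find hex = i + 1 :=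
    Nat.exists_eq_succ_of_ne_zero fun h => (h ▸ (Nat.find_spec hex).2).ne' h0
  obtain ⟨hin, hlt⟩ := hi ▸ Nat.find_spec hex
  have hle : g i ≤ s i := not_lt.1 fun h => Nat.find_min hex (by omega) ⟨by omega, h⟩
  exact ⟨i, by omega, by linarith [hs i], hlt⟩

section Crossing

variable {g : ℕ → ℝ} {L s : ℝ} {i : ℕ}

theorem add_le_iff_le_of_crossing (hg : Monotone g) (hL : 0 ≤ L) (hi : g i + L ≤ s)
    (hsi : s < g (i + 1)) (j : ℕ) : g j + L ≤ s ↔ j ≤ i := by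
  refine ⟨fun h => not_lt.1 fun hij => ?_, fun hji => le_trans (by linarith [hg hji]) hi⟩
  linarith [hg (Nat.succ_le_of_lt hij)]

theorem not_mem_interior_of_crossing (hg : Monotone g) (hi : g i + L ≤ s)
    (hsi : s < g (i + 1)) (j : ℕ) : ¬ (g j < s ∧ s < g j + L) := by
  rintro ⟨h₁, h₂⟩
  rcases le_or_gt j i with hji | hij
  · linarith [hg hji]
  · linarith [hg (Nat.succ_le_of_lt hij)]

theorem natCard_add_le_of_crossing {k : ℕ} (hg : Monotone g) (hL : 0 ≤ L) (hi : g i + L ≤ s)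
    (hsi : s < g (i + 1)) (hik : i < k) :
    Nat.card {j : Fin k // g 0 ≤ g j ∧ g j + L ≤ s} = i + 1 := by
  classical
  have hleft : ∀ j : Fin k, (g 0 ≤ g j ∧ g j + L ≤ s) ↔ (j : ℕ) < i + 1 := fun j => by
    rw [add_le_iff_le_of_crossing hg hL hi hsi, Nat.lt_succ_iff]
    exact and_iff_right (hg (Nat.zero_le j))
  rw [Nat.card_congr (Equiv.subtypeEquivRight hleft), Nat.card_eq_fintype_card,
    Fintype.card_subtype, Fin.card_filter_val_lt]
  omega

end Crossing

/-- **fair split point lemma.** Let `S ⊂ [x, x']` with `x, x' ∈ S`, and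
let `s_i = x + i(x'-x)/k` be the points partitioning `[x, x']` into `k` equal parts.
Then some `s_i` (`1 ≤ i ≤ k-1`) is a fair split point: there is an optimal covering
of `S` by `k` intervals of length `OptLen k S` such that `s_i` lies in the interior of
no interval and exactly `i` of the intervals lie in `[x, s_i]`. -/
theorem fair_split_point (k : ℕ) (hk : 2 ≤ k) (S : Finset ℝ) (x x' : ℝ)
    (hx : x ∈ S) (hx' : x' ∈ S) (hS : ∀ p ∈ S, x ≤ p ∧ p ≤ x') :
    ∃ i : ℕ, 1 ≤ i ∧ i ≤ k - 1 ∧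
      ∃ t : Fin k → ℝ,
        (∀ p ∈ S, ∃ j, t j ≤ p ∧ p ≤ t j + OptLen k S) ∧
        (∀ j : Fin k,
          ¬ (t j < x + i * (x' - x) / k ∧ x + i * (x' - x) / k < t j + OptLen k S)) ∧
        Nat.card {j : Fin k // x ≤ t j ∧ t j + OptLen k S ≤ x + i * (x' - x) / k} = i := by
  set L := OptLen k S
  set g := greedy S x L
  set s : ℕ → ℝ := fun i => x + i * (x' - x) / k
  have hd : 0 ≤ (x' - x) / k := div_nonneg (by linarith [(hS x hx).2]) k.cast_nonneg
  have htile := covers_greedy_div (k := k) (by omega) hS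
  have hL : 0 ≤ L := optLen_nonneg k S
  have hmono : Monotone g := greedy_monotone hL
  have hcov : Covers S L fun j : Fin k => g j :=
    covers_greedy (fun p hp => (hS p hp).1) fun p hp => lt_greedy_optLen hx htile hd hp
  have hend : s (k - 1 + 1) ≤ g (k - 1) + L := by
    obtain ⟨j, -, hj⟩ := hcov x' hx'
    have hsk : s (k - 1 + 1) = x' := by
      simp only [s, Nat.sub_add_cancel (by omega : 1 ≤ k)]
      field_simp
      ring
    linarith [hmono (Nat.le_sub_one_of_lt j.2)]
  obtain ⟨i, hik, hgi, hsi⟩ := exists_first_crossing (optLen_le htile hd) (by simp [s, greedy])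
    (fun i => by simp only [s]; push_cast; ring) (add_lt_greedy_succ 0) (by omega) hend
  exact ⟨i + 1, by omega, by omega, fun j => g j, hcov,
    fun j => not_mem_interior_of_crossing hmono hgi hsi j,
    natCard_add_le_of_crossing hmono hL hgi hsi (by omega)⟩
end

section
/- Let S be a finite set of points in R contained in [x, x'] with x, x' ∈ S, and suppose the optimal k-center interval length Opt_k(S) is strictly smaller than (x'−x)/k. Then in any optimal covering of S by at most k intervals of length Opt_k(S), each interval contains at most one of the k+1 equally spaced points s_0 = x, s_1, ..., s_k = x', and consequently at least one split point s_i with 1 <= i <= k−1 does not lie in the interior of any interval of the optimal solution. -/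
/-- If `OptLen k S < (x'-x)/k`, then in any optimal covering of `S`
by `k` intervals of length `OptLen k S`, each interval contains at most one of the
points `s_0, …, s_k` (where `s_i = x + i(x'-x)/k`), and some split point `s_i` with
`1 ≤ i ≤ k-1` lies in the interior of no interval. -/
theorem uncovered_split_point (k : ℕ) (hk : 2 ≤ k) (S : Finset ℝ) (x x' : ℝ)
    (hx : x ∈ S) (hx' : x' ∈ S) (hS : ∀ p ∈ S, x ≤ p ∧ p ≤ x')
    (hopt : OptLen k S < (x' - x) / k)
    (t : Fin k → ℝ)
    (hcover : ∀ p ∈ S, ∃ j, t j ≤ p ∧ p ≤ t j + OptLen k S) :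
    (∀ j : Fin k, ∀ i i' : ℕ, i ≤ k → i' ≤ k →
      (t j ≤ x + i * (x' - x) / k ∧ x + i * (x' - x) / k ≤ t j + OptLen k S) →
      (t j ≤ x + i' * (x' - x) / k ∧ x + i' * (x' - x) / k ≤ t j + OptLen k S) →
      i = i') ∧
    (∃ i : ℕ, 1 ≤ i ∧ i ≤ k - 1 ∧
      ∀ j : Fin k,
        ¬ (t j < x + i * (x' - x) / k ∧ x + i * (x' - x) / k < t j + OptLen k S)) := by
  set L := OptLen k S with hLdef
  have hL0 : 0 ≤ L := Real.sInf_nonneg (by rintro y ⟨hy, -⟩; exact hy)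
  have hkR : (0:ℝ) < (k:ℝ) := by
    have : 0 < k := by omega
    exact_mod_cast this
  have hd : 0 < (x' - x) / k := lt_of_le_of_lt hL0 hopt
  have hxx : 0 < x' - x := by
    have := (div_pos_iff.mp hd)
    rcases this with ⟨h, _⟩ | ⟨_, h⟩
    · exact h
    · linarith
  -- helper: no interval contains two distinct split points
  have key : ∀ j : Fin k, ∀ i i' : ℕ, i < i' →
      (t j ≤ x + (i:ℝ) * (x' - x) / k ∧ x + (i:ℝ) * (x' - x) / k ≤ t j + L) →
      (t j ≤ x + (i':ℝ) * (x' - x) / k ∧ x + (i':ℝ) * (x' - x) / k ≤ t j + L) →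
      False := by
    intro j i i' hlt h1 h2
    have hii : (i:ℝ) + 1 ≤ (i':ℝ) := by exact_mod_cast hlt
    have h3 : ((i':ℝ) - i) * ((x' - x) / k) ≥ (x' - x) / k := by
      nlinarith [mul_le_mul_of_nonneg_right (show (1:ℝ) ≤ (i':ℝ) - i by linarith) hd.le]
    have e1 : (i:ℝ) * (x' - x) / k = (i:ℝ) * ((x' - x) / k) := by ring
    have e2 : (i':ℝ) * (x' - x) / k = (i':ℝ) * ((x' - x) / k) := by ring
    rw [e1] at h1
    rw [e2] at h2
    nlinarith [h1.1, h2.2]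
  have part1 : ∀ j : Fin k, ∀ i i' : ℕ, i ≤ k → i' ≤ k →
      (t j ≤ x + i * (x' - x) / k ∧ x + i * (x' - x) / k ≤ t j + L) →
      (t j ≤ x + i' * (x' - x) / k ∧ x + i' * (x' - x) / k ≤ t j + L) →
      i = i' := by
    intro j i i' _ _ h1 h2
    rcases lt_trichotomy i i' with h | h | h
    · exact absurd (key j i i' h h1 h2) (by simp)
    · exact h
    · exact absurd (key j i' i h h2 h1) (by simp)
  refine ⟨part1, ?_⟩
  by_contra hcon
  push_neg at hcon
  have hall : ∀ i : Fin (k+1), ∃ j : Fin k,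
      t j ≤ x + ((i:ℕ):ℝ) * (x' - x) / k ∧ x + ((i:ℕ):ℝ) * (x' - x) / k ≤ t j + L := by
    intro i
    rcases Nat.eq_zero_or_pos (i : ℕ) with h0 | h1
    · obtain ⟨j, hj1, hj2⟩ := hcover x hx
      exact ⟨j, by rw [h0]; simpa using hj1, by rw [h0]; simpa using hj2⟩
    · rcases eq_or_lt_of_le (Nat.lt_succ_iff.mp i.isLt) with hik | hik
      · obtain ⟨j, hj1, hj2⟩ := hcover x' hx'
        have e : x + ((i:ℕ):ℝ) * (x' - x) / k = x' := by
          rw [hik]; field_simp; ring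
        exact ⟨j, by rw [e]; exact hj1, by rw [e]; exact hj2⟩
      · obtain ⟨j, hj1, hj2⟩ := hcon (i : ℕ) h1 (by omega)
        exact ⟨j, hj1.le, hj2.le⟩
  choose f hf1 hf2 using hall
  obtain ⟨a, b, hab, hfab⟩ := Fintype.exists_ne_map_eq_of_card_lt f (by simp)
  have : (a : ℕ) = (b : ℕ) := by
    refine part1 (f a) a b (Nat.lt_succ_iff.mp a.isLt) (Nat.lt_succ_iff.mp b.isLt)
      ⟨hf1 a, hf2 a⟩ ?_
    rw [hfab]
    exact ⟨hf1 b, hf2 b⟩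
  exact hab (Fin.ext this)
end

section
/- Let Q be an axis-aligned rectangle in R^2 whose every edge contains at least one point of a finite set S ⊆ Q. If σ and σ' are two congruent axis-aligned squares of minimum size whose union covers S, then each of σ and σ' can be taken to share a corner with Q, and these corners are opposite corners of Q. -/
/-!
Any cover of `S` by two squares of side `L` can be pushed into a cover by two squares of side `L`
anchored at opposite corners of `Q`. On each axis, a square that contains the point of `S` on the
left (bottom) edge of `Q` meets `Q` inside the strip of width `L` along that edge, and if it also
contains the point on the right (top) edge then `Q` is at most `L` wide (high) and both strips are
all of `Q`. So the two squares split the edges between them, and each lies, within `Q`, in a square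
anchored at a corner; the two corners are opposite.

Being coverable by such an anchored pair is a closed condition on `L`, and `opt2 S` lies in the
closure of the set of side lengths admitting a cover, so the anchored cover exists at `opt2 S`.
-/

open Set

/-- The axis-aligned square in `ℝ²` with bottom-left corner `a` and side length `L`. -/
def square (a : ℝ × ℝ) (L : ℝ) : Set (ℝ × ℝ) :=
  {p | a.1 ≤ p.1 ∧ p.1 ≤ a.1 + L ∧ a.2 ≤ p.2 ∧ p.2 ≤ a.2 + L}

/-- The minimum side length of two congruent axis-aligned squares covering `S`. -/
noncomputable def opt2 (S : Finset (ℝ × ℝ)) : ℝ :=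
  sInf {L | 0 ≤ L ∧ ∃ a a' : ℝ × ℝ, ∀ p ∈ S, p ∈ square a L ∨ p ∈ square a' L}

section Interval

variable {x1 x2 a b L : ℝ}

theorem Icc_inter_Icc_subset_left (h : x1 ∈ Icc a (a + L)) :
    Icc x1 x2 ∩ Icc a (a + L) ⊆ Icc x1 (x1 + L) :=
  fun _ ⟨hx, hxa⟩ => ⟨hx.1, by linarith [h.1, hxa.2]⟩

theorem Icc_inter_Icc_subset_right (h : x2 ∈ Icc a (a + L)) :
    Icc x1 x2 ∩ Icc a (a + L) ⊆ Icc (x2 - L) (x2 - L + L) :=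
  fun _ ⟨hx, hxa⟩ => ⟨by linarith [h.2, hxa.1], by linarith [hx.2]⟩

theorem Icc_subset_of_mem_Icc (h1 : x1 ∈ Icc a (a + L)) (h2 : x2 ∈ Icc a (a + L)) :
    Icc x1 x2 ⊆ Icc x1 (x1 + L) ∩ Icc (x2 - L) (x2 - L + L) :=
  fun _ hx => ⟨⟨hx.1, by linarith [hx.2, h1.1, h2.2]⟩,
    ⟨by linarith [hx.1, h1.1, h2.2], by linarith [hx.2]⟩⟩

theorem Icc_inter_subset_of_endpoints_mem_union
    (h1 : x1 ∈ Icc a (a + L) ∪ Icc b (b + L)) (h2 : x2 ∈ Icc a (a + L) ∪ Icc b (b + L)) :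
    (Icc x1 x2 ∩ Icc a (a + L) ⊆ Icc x1 (x1 + L) ∧
        Icc x1 x2 ∩ Icc b (b + L) ⊆ Icc (x2 - L) (x2 - L + L)) ∨
      (Icc x1 x2 ∩ Icc a (a + L) ⊆ Icc (x2 - L) (x2 - L + L) ∧
        Icc x1 x2 ∩ Icc b (b + L) ⊆ Icc x1 (x1 + L)) := by
  rcases h1 with h1 | h1 <;> rcases h2 with h2 | h2
  · have h := Icc_subset_of_mem_Icc h1 h2
    exact .inl ⟨Icc_inter_Icc_subset_left h1,
      inter_subset_left.trans (h.trans inter_subset_right)⟩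
  · exact .inl ⟨Icc_inter_Icc_subset_left h1, Icc_inter_Icc_subset_right h2⟩
  · exact .inr ⟨Icc_inter_Icc_subset_right h2, Icc_inter_Icc_subset_left h1⟩
  · have h := Icc_subset_of_mem_Icc h1 h2
    exact .inl ⟨inter_subset_left.trans (h.trans inter_subset_left),
      Icc_inter_Icc_subset_right h2⟩

end Interval

theorem square_eq_prod (a : ℝ × ℝ) (L : ℝ) :
    square a L = Icc a.1 (a.1 + L) ×ˢ Icc a.2 (a.2 + L) := by
  ext p
  simp only [square, mem_ofPred_eq, mem_prod, mem_Icc, and_assoc]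

theorem prod_inter_square_subset_square {x1 x2 y1 y2 L : ℝ} {a c : ℝ × ℝ}
    (hx : Icc x1 x2 ∩ Icc a.1 (a.1 + L) ⊆ Icc c.1 (c.1 + L))
    (hy : Icc y1 y2 ∩ Icc a.2 (a.2 + L) ⊆ Icc c.2 (c.2 + L)) :
    Icc x1 x2 ×ˢ Icc y1 y2 ∩ square a L ⊆ square c L := by
  rw [square_eq_prod, square_eq_prod, prod_inter_prod]
  exact prod_mono hx hy

theorem exists_forall_mem_square (S : Finset (ℝ × ℝ)) :
    ∃ L, 0 ≤ L ∧ ∃ a, ∀ p ∈ S, p ∈ square a L := by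
  obtain ⟨lo, hlo⟩ := S.bddBelow
  obtain ⟨hi, hhi⟩ := S.bddAbove
  refine ⟨|hi.1 - lo.1| + |hi.2 - lo.2|, by positivity, lo, fun p hp => ?_⟩
  have hl : lo ≤ p := hlo hp
  have hh : p ≤ hi := hhi hp
  exact ⟨hl.1, by linarith [hh.1, le_abs_self (hi.1 - lo.1), abs_nonneg (hi.2 - lo.2)], hl.2,
    by linarith [hh.2, le_abs_self (hi.2 - lo.2), abs_nonneg (hi.1 - lo.1)]⟩

def TwoSquareCover (S : Finset (ℝ × ℝ)) (a a' : ℝ × ℝ) (L : ℝ) : Prop :=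
  ∀ p ∈ S, p ∈ square a L ∨ p ∈ square a' L

theorem opt2_mem_closure (S : Finset (ℝ × ℝ)) :
    opt2 S ∈ closure {L | 0 ≤ L ∧ ∃ a a', TwoSquareCover S a a' L} := by
  obtain ⟨L, hL, a, ha⟩ := exists_forall_mem_square S
  exact csInf_mem_closure ⟨L, hL, a, a, fun p hp => .inl (ha p hp)⟩ ⟨0, fun _ hL => hL.1⟩

theorem isClosed_setOf_mem_square (p : ℝ × ℝ) {c : ℝ → ℝ × ℝ} (hc : Continuous c) :
    IsClosed {L | p ∈ square (c L) L} :=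
  have h1 : Continuous fun L => (c L).1 := hc.fst
  have h2 : Continuous fun L => (c L).2 := hc.snd
  (isClosed_le h1 continuous_const).inter <|
    (isClosed_le continuous_const (h1.add continuous_id)).inter <|
    (isClosed_le h2 continuous_const).inter (isClosed_le continuous_const (h2.add continuous_id))

theorem isClosed_setOf_twoSquareCover (S : Finset (ℝ × ℝ)) {c c' : ℝ → ℝ × ℝ}
    (hc : Continuous c) (hc' : Continuous c') :
    IsClosed {L | TwoSquareCover S (c L) (c' L) L} := by
  simp only [TwoSquareCover, ofPred_forall]
  exact isClosed_biInter fun p _ =>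
    (isClosed_setOf_mem_square p hc).union (isClosed_setOf_mem_square p hc')

def AnchoredCover (S : Finset (ℝ × ℝ)) (x1 x2 y1 y2 L : ℝ) : Prop :=
  TwoSquareCover S (x1, y2 - L) (x2 - L, y1) L ∨ TwoSquareCover S (x1, y1) (x2 - L, y2 - L) L

theorem isClosed_setOf_anchoredCover (S : Finset (ℝ × ℝ)) (x1 x2 y1 y2 : ℝ) :
    IsClosed {L | AnchoredCover S x1 x2 y1 y2 L} :=
  (isClosed_setOf_twoSquareCover S (by fun_prop) (by fun_prop)).union
    (isClosed_setOf_twoSquareCover S (by fun_prop) (by fun_prop))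

theorem anchoredCover_of_twoSquareCover {S : Finset (ℝ × ℝ)}
    {x1 x2 y1 y2 L : ℝ} {a b : ℝ × ℝ}
    (hS : ↑S ⊆ Icc x1 x2 ×ˢ Icc y1 y2)
    (hleft : ∃ p ∈ S, p.1 = x1) (hright : ∃ p ∈ S, p.1 = x2)
    (hbottom : ∃ p ∈ S, p.2 = y1) (htop : ∃ p ∈ S, p.2 = y2)
    (hcov : TwoSquareCover S a b L) :
    AnchoredCover S x1 x2 y1 y2 L := by
  have cover_x {t : ℝ} :
      (∃ p ∈ S, p.1 = t) → t ∈ Icc a.1 (a.1 + L) ∪ Icc b.1 (b.1 + L) := by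
    rintro ⟨p, hp, rfl⟩
    exact (hcov p hp).imp (fun h => ⟨h.1, h.2.1⟩) (fun h => ⟨h.1, h.2.1⟩)
  have cover_y {t : ℝ} :
      (∃ p ∈ S, p.2 = t) → t ∈ Icc a.2 (a.2 + L) ∪ Icc b.2 (b.2 + L) := by
    rintro ⟨p, hp, rfl⟩
    exact (hcov p hp).imp (fun h => ⟨h.2.2.1, h.2.2.2⟩) (fun h => ⟨h.2.2.1, h.2.2.2⟩)
  have of_subset {c c' : ℝ × ℝ}
      (h : Icc x1 x2 ×ˢ Icc y1 y2 ∩ square a L ⊆ square c L ∧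
          Icc x1 x2 ×ˢ Icc y1 y2 ∩ square b L ⊆ square c' L ∨
        Icc x1 x2 ×ˢ Icc y1 y2 ∩ square a L ⊆ square c' L ∧
          Icc x1 x2 ×ˢ Icc y1 y2 ∩ square b L ⊆ square c L) :
      TwoSquareCover S c c' L := fun p hp => by
    rcases h with ⟨ha, hb⟩ | ⟨ha, hb⟩
    · exact (hcov p hp).imp (fun h => ha ⟨hS hp, h⟩) (fun h => hb ⟨hS hp, h⟩)
    · exact ((hcov p hp).imp (fun h => ha ⟨hS hp, h⟩) (fun h => hb ⟨hS hp, h⟩)).symm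
  rcases Icc_inter_subset_of_endpoints_mem_union (cover_x hleft) (cover_x hright)
    with ⟨hax, hbx⟩ | ⟨hax, hbx⟩ <;>
  rcases Icc_inter_subset_of_endpoints_mem_union (cover_y hbottom) (cover_y htop)
    with ⟨hay, hby⟩ | ⟨hay, hby⟩
  · exact .inr (of_subset (.inl ⟨prod_inter_square_subset_square (c := (x1, y1)) hax hay,
      prod_inter_square_subset_square (c := (x2 - L, y2 - L)) hbx hby⟩))
  · exact .inl (of_subset (.inl ⟨prod_inter_square_subset_square (c := (x1, y2 - L)) hax hay,
      prod_inter_square_subset_square (c := (x2 - L, y1)) hbx hby⟩))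
  · exact .inl (of_subset (.inr ⟨prod_inter_square_subset_square (c := (x2 - L, y1)) hax hay,
      prod_inter_square_subset_square (c := (x1, y2 - L)) hbx hby⟩))
  · exact .inr (of_subset (.inr ⟨prod_inter_square_subset_square (c := (x2 - L, y2 - L)) hax hay,
      prod_inter_square_subset_square (c := (x1, y1)) hbx hby⟩))

theorem two_center_anchored_general (S : Finset (ℝ × ℝ)) (x1 x2 y1 y2 : ℝ)
    (hS : ∀ p ∈ S, x1 ≤ p.1 ∧ p.1 ≤ x2 ∧ y1 ≤ p.2 ∧ p.2 ≤ y2)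
    (hleft : ∃ p ∈ S, p.1 = x1) (hright : ∃ p ∈ S, p.1 = x2)
    (hbottom : ∃ p ∈ S, p.2 = y1) (htop : ∃ p ∈ S, p.2 = y2) :
    (∀ p ∈ S, p ∈ square (x1, y2 - opt2 S) (opt2 S) ∨ p ∈ square (x2 - opt2 S, y1) (opt2 S)) ∨
    (∀ p ∈ S, p ∈ square (x1, y1) (opt2 S) ∨ p ∈ square (x2 - opt2 S, y2 - opt2 S) (opt2 S)) := by
  have hQ : ↑S ⊆ Icc x1 x2 ×ˢ Icc y1 y2 := fun p hp =>
    let ⟨h1, h2, h3, h4⟩ := hS p hp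
    ⟨⟨h1, h2⟩, h3, h4⟩
  refine (isClosed_setOf_anchoredCover S x1 x2 y1 y2).closure_subset_iff.2 ?_ (opt2_mem_closure S)
  rintro L ⟨-, a, b, hcov⟩
  exact anchoredCover_of_twoSquareCover hQ hleft hright hbottom htop hcov

/-- If each edge of the rectangle `Q = [x1,x2] × [y1,y2]` contains a
point of `S ⊆ Q`, then there is an optimal covering of `S` by two congruent squares
anchored at opposite corners of `Q`: either topleft/bottomright or bottomleft/topright. -/
theorem two_center_anchored (S : Finset (ℝ × ℝ)) (x1 x2 y1 y2 : ℝ)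
    (hx : x1 ≤ x2) (hy : y1 ≤ y2)
    (hS : ∀ p ∈ S, x1 ≤ p.1 ∧ p.1 ≤ x2 ∧ y1 ≤ p.2 ∧ p.2 ≤ y2)
    (hleft : ∃ p ∈ S, p.1 = x1) (hright : ∃ p ∈ S, p.1 = x2)
    (hbottom : ∃ p ∈ S, p.2 = y1) (htop : ∃ p ∈ S, p.2 = y2) :
    (∀ p ∈ S, p ∈ square (x1, y2 - opt2 S) (opt2 S) ∨ p ∈ square (x2 - opt2 S, y1) (opt2 S)) ∨
    (∀ p ∈ S, p ∈ square (x1, y1) (opt2 S) ∨ p ∈ square (x2 - opt2 S, y2 - opt2 S) (opt2 S)) :=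
  two_center_anchored_general S x1 x2 y1 y2 hS hleft hright hbottom htop
end

section
/- Let Q be an axis-aligned rectangle each of whose edges contains a point of the finite set S ⊆ Q ⊂ R^2. In any optimal covering of S by three congruent axis-aligned squares of minimum side length contained appropriately, at least one of the three squares can be assumed to be anchored at (share) one of the four corners of Q. -/
/-- The minimum side length of three congruent axis-aligned squares covering `S`. -/
noncomputable def opt3 (S : Finset (ℝ × ℝ)) : ℝ :=
  sInf {L | 0 ≤ L ∧ ∃ a1 a2 a3 : ℝ × ℝ, ∀ p ∈ S, p ∈ square a1 L ∨ p ∈ square a2 L ∨ p ∈ square a3 L}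

/-!
The optimum is attained: covering `S` by squares of side `L` amounts to coloring `S` so that
every color class has sup-diameter at most `L`, so the feasible side lengths form a finite union
of closed half-lines. In an optimal cover, two of the four points of `S` on the edges of `Q` share
a square. If they lie on adjacent edges, that square, clipped to `Q`, fits in the square anchored
at their common corner. If they lie on opposite edges, say left and right, then `Q` is at most `L`
wide and the square containing the bottom point can be slid to a bottom corner. Either way,
replacing the square by the anchored one keeps a cover.
-/

open Set

theorem dist_le_of_mem_square {a p q : ℝ × ℝ} {L : ℝ} (hp : p ∈ square a L)
    (hq : q ∈ square a L) : dist p q ≤ L := by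
  obtain ⟨hp1, hp2, hp3, hp4⟩ := hp
  obtain ⟨hq1, hq2, hq3, hq4⟩ := hq
  rw [Prod.dist_eq, Real.dist_eq, Real.dist_eq, max_le_iff, abs_sub_le_iff, abs_sub_le_iff]
  refine ⟨⟨?_, ?_⟩, ?_, ?_⟩ <;> linarith

theorem Real.subset_Icc_csInf_of_dist_le {T : Set ℝ} {L : ℝ} (hT : BddBelow T)
    (h : ∀ x ∈ T, ∀ y ∈ T, dist x y ≤ L) : T ⊆ Icc (sInf T) (sInf T + L) := by
  intro x hx
  refine ⟨csInf_le hT hx, sub_le_iff_le_add.mp (le_csInf ⟨x, hx⟩ fun y hy => ?_)⟩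
  have := (abs_sub_le_iff.mp (h x hx y hy)).1
  linarith

theorem subset_square_of_dist_le {T : Set (ℝ × ℝ)} {L : ℝ} (hT : BddBelow T)
    (h : ∀ p ∈ T, ∀ q ∈ T, dist p q ≤ L) :
    T ⊆ square (sInf (Prod.fst '' T), sInf (Prod.snd '' T)) L := by
  have hfst : ∀ p ∈ T, ∀ q ∈ T, dist p.1 q.1 ≤ L := fun p hp q hq =>
    (le_max_left _ _).trans ((Prod.dist_eq (x := p) (y := q)) ▸ h p hp q hq)
  have hsnd : ∀ p ∈ T, ∀ q ∈ T, dist p.2 q.2 ≤ L := fun p hp q hq =>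
    (le_max_right _ _).trans ((Prod.dist_eq (x := p) (y := q)) ▸ h p hp q hq)
  rw [square_eq_prod]
  intro p hp
  refine ⟨?_, ?_⟩
  · exact Real.subset_Icc_csInf_of_dist_le (monotone_fst.map_bddBelow hT)
      (by simpa only [forall_mem_image] using hfst) (mem_image_of_mem _ hp)
  · exact Real.subset_Icc_csInf_of_dist_le (monotone_snd.map_bddBelow hT)
      (by simpa only [forall_mem_image] using hsnd) (mem_image_of_mem _ hp)

-- `dist` on `ℝ × ℝ` is the sup metric: a finite set fits in a square of side `L` iff its
-- diameter is at most `L`.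
theorem exists_cover_iff_exists_coloring {ι : Type*} (S : Finset (ℝ × ℝ)) (L : ℝ) :
    (∃ a : ι → ℝ × ℝ, ∀ p ∈ S, ∃ i, p ∈ square (a i) L) ↔
      ∃ g : S → ι, ∀ p q : S, g p = g q → dist (p : ℝ × ℝ) q ≤ L := by
  constructor
  · rintro ⟨a, ha⟩
    choose g hg using ha
    refine ⟨fun p => g p p.2, fun p q hpq => dist_le_of_mem_square (hg p p.2) ?_⟩
    simpa only [hpq] using hg q q.2
  · rintro ⟨g, hg⟩
    let T : ι → Set (ℝ × ℝ) := fun i => Subtype.val '' {p | g p = i}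
    have hT : ∀ i, BddBelow (T i) := fun i =>
      (S.finite_toSet.subset (by rintro _ ⟨p, -, rfl⟩; exact p.2)).bddBelow
    refine ⟨fun i => (sInf (Prod.fst '' T i), sInf (Prod.snd '' T i)), fun p hp => ⟨g ⟨p, hp⟩, ?_⟩⟩
    refine subset_square_of_dist_le (hT _) ?_ ⟨⟨p, hp⟩, rfl, rfl⟩
    rintro _ ⟨q, hq, rfl⟩ _ ⟨r, hr, rfl⟩
    exact hg q r (hq.trans hr.symm)

theorem isClosed_setOf_exists_cover {ι : Type*} [Finite ι] (S : Finset (ℝ × ℝ)) :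
    IsClosed {L | ∃ a : ι → ℝ × ℝ, ∀ p ∈ S, ∃ i, p ∈ square (a i) L} := by
  simp only [exists_cover_iff_exists_coloring, ofPred_exists, ofPred_forall]
  exact isClosed_iUnion_of_finite fun g => isClosed_iInter fun p => isClosed_iInter fun q =>
    isClosed_iInter fun _ => isClosed_Ici

theorem exists_three_iff_exists_fin_three {S : Finset (ℝ × ℝ)} {L : ℝ} :
    (∃ a1 a2 a3 : ℝ × ℝ, ∀ p ∈ S, p ∈ square a1 L ∨ p ∈ square a2 L ∨ p ∈ square a3 L) ↔
      ∃ a : Fin 3 → ℝ × ℝ, ∀ p ∈ S, ∃ i, p ∈ square (a i) L := by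
  simp [Fin.exists_fin_succ_pi, Fin.exists_fin_succ]

theorem exists_cover_opt3 (S : Finset (ℝ × ℝ)) :
    ∃ a : Fin 3 → ℝ × ℝ, ∀ p ∈ S, ∃ i, p ∈ square (a i) (opt3 S) := by
  let F := Ici 0 ∩ {L | ∃ a : Fin 3 → ℝ × ℝ, ∀ p ∈ S, ∃ i, p ∈ square (a i) L}
  have hopt : opt3 S = sInf F := by simp only [opt3, exists_three_iff_exists_fin_three]; rfl
  have hclosed : IsClosed F := isClosed_Ici.inter (isClosed_setOf_exists_cover S)
  obtain ⟨C, hC⟩ := Metric.isBounded_iff.mp S.finite_toSet.isBounded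
  have hne : F.Nonempty := ⟨max C 0, le_max_right C 0,
    (exists_cover_iff_exists_coloring S _).mpr
      ⟨fun _ => 0, fun p q _ => (hC p.2 q.2).trans (le_max_left C 0)⟩⟩
  exact hopt ▸ (hclosed.csInf_mem hne ⟨0, fun _ h => h.1⟩).2

def IsAnchorable (lo hi L u : ℝ) : Prop :=
  ∃ t, (t = lo ∨ t = hi - L) ∧ Icc lo hi ∩ Icc u (u + L) ⊆ Icc t (t + L)

theorem isAnchorable_of_le {lo hi L u : ℝ} (h : u ≤ lo) : IsAnchorable lo hi L u :=
  ⟨lo, .inl rfl, fun _ ⟨⟨h1, _⟩, _, h4⟩ => ⟨h1, by linarith⟩⟩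

theorem isAnchorable_of_le_add {lo hi L u : ℝ} (h : hi ≤ u + L) : IsAnchorable lo hi L u :=
  ⟨hi - L, .inr rfl, fun _ ⟨⟨_, h2⟩, h3, _⟩ => ⟨by linarith, by linarith⟩⟩

theorem isAnchorable_of_sub_le {lo hi L u : ℝ} (h : hi - lo ≤ L) : IsAnchorable lo hi L u :=
  ⟨lo, .inl rfl, fun _ ⟨⟨h1, h2⟩, _⟩ => ⟨h1, by linarith⟩⟩

theorem exists_corner_of_isAnchorable {x1 x2 y1 y2 L : ℝ} {a : ℝ × ℝ}
    (hx : IsAnchorable x1 x2 L a.1) (hy : IsAnchorable y1 y2 L a.2) :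
    ∃ b : ℝ × ℝ, (b = (x1, y1) ∨ b = (x1, y2 - L) ∨ b = (x2 - L, y1) ∨ b = (x2 - L, y2 - L)) ∧
      Icc x1 x2 ×ˢ Icc y1 y2 ∩ square a L ⊆ square b L := by
  obtain ⟨t, ht, hts⟩ := hx
  obtain ⟨s, hs, hss⟩ := hy
  refine ⟨(t, s), by rcases ht with rfl | rfl <;> rcases hs with rfl | rfl <;> simp, ?_⟩
  rw [square_eq_prod, square_eq_prod, prod_inter_prod]
  exact prod_mono hts hss

theorem fin_three_pigeonhole (i j k l : Fin 3) :
    i = j ∨ i = k ∨ i = l ∨ j = k ∨ j = l ∨ k = l := by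
  revert i j k l
  decide

theorem exists_isAnchorable_of_reach {x1 x2 y1 y2 L : ℝ} (a : Fin 3 → ℝ × ℝ)
    {il ir ib it : Fin 3} (hl : (a il).1 ≤ x1) (hr : x2 ≤ (a ir).1 + L)
    (hb : (a ib).2 ≤ y1) (ht : y2 ≤ (a it).2 + L) :
    ∃ i, IsAnchorable x1 x2 L (a i).1 ∧ IsAnchorable y1 y2 L (a i).2 := by
  rcases fin_three_pigeonhole il ir ib it with rfl | rfl | rfl | rfl | rfl | rfl
  · exact ⟨ib, isAnchorable_of_sub_le (by linarith), isAnchorable_of_le hb⟩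
  · exact ⟨il, isAnchorable_of_le hl, isAnchorable_of_le hb⟩
  · exact ⟨il, isAnchorable_of_le hl, isAnchorable_of_le_add ht⟩
  · exact ⟨ir, isAnchorable_of_le_add hr, isAnchorable_of_le hb⟩
  · exact ⟨ir, isAnchorable_of_le_add hr, isAnchorable_of_le_add ht⟩
  · exact ⟨il, isAnchorable_of_le hl, isAnchorable_of_sub_le (by linarith)⟩

theorem exists_cover_of_replace {S : Finset (ℝ × ℝ)} {L : ℝ} {a : Fin 3 → ℝ × ℝ}
    (hcov : ∀ p ∈ S, ∃ i, p ∈ square (a i) L) {i : Fin 3} {b : ℝ × ℝ}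
    (hb : ∀ p ∈ S, p ∈ square (a i) L → p ∈ square b L) :
    ∃ a2 a3, ∀ p ∈ S, p ∈ square b L ∨ p ∈ square a2 L ∨ p ∈ square a3 L := by
  refine ⟨a (i + 1), a (i + 2), fun p hp => ?_⟩
  obtain ⟨j, hj⟩ := hcov p hp
  obtain rfl | rfl | rfl : j = i ∨ j = i + 1 ∨ j = i + 2 := by
    fin_cases i <;> fin_cases j <;> decide
  exacts [.inl (hb p hp hj), .inr (.inl hj), .inr (.inr hj)]

theorem three_center_anchored_general (S : Finset (ℝ × ℝ)) (x1 x2 y1 y2 : ℝ)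
    (hS : ∀ p ∈ S, x1 ≤ p.1 ∧ p.1 ≤ x2 ∧ y1 ≤ p.2 ∧ p.2 ≤ y2)
    (hleft : ∃ p ∈ S, p.1 = x1) (hright : ∃ p ∈ S, p.1 = x2)
    (hbottom : ∃ p ∈ S, p.2 = y1) (htop : ∃ p ∈ S, p.2 = y2) :
    ∃ a1 a2 a3 : ℝ × ℝ,
      (∀ p ∈ S, p ∈ square a1 (opt3 S) ∨ p ∈ square a2 (opt3 S) ∨ p ∈ square a3 (opt3 S)) ∧
      (a1 = (x1, y1) ∨ a1 = (x1, y2 - opt3 S) ∨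
        a1 = (x2 - opt3 S, y1) ∨ a1 = (x2 - opt3 S, y2 - opt3 S)) := by
  obtain ⟨a, hcov⟩ := exists_cover_opt3 S
  obtain ⟨pl, hpl, rfl⟩ := hleft
  obtain ⟨pr, hpr, rfl⟩ := hright
  obtain ⟨pb, hpb, rfl⟩ := hbottom
  obtain ⟨pt, hpt, rfl⟩ := htop
  obtain ⟨il, hil⟩ := hcov pl hpl
  obtain ⟨ir, hir⟩ := hcov pr hpr
  obtain ⟨ib, hib⟩ := hcov pb hpb
  obtain ⟨it, hit⟩ := hcov pt hpt
  obtain ⟨i, hix, hiy⟩ := exists_isAnchorable_of_reach a hil.1 hir.2.1 hib.2.2.1 hit.2.2.2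
  obtain ⟨b, hb, hsub⟩ := exists_corner_of_isAnchorable hix hiy
  obtain ⟨a2, a3, hcov'⟩ := exists_cover_of_replace hcov (i := i) fun p hp hpi =>
    have ⟨h1, h2, h3, h4⟩ := hS p hp
    hsub ⟨⟨⟨h1, h2⟩, h3, h4⟩, hpi⟩
  exact ⟨b, a2, a3, hcov', hb⟩

/-- If each edge of the rectangle `Q = [x1,x2] × [y1,y2]` contains a
point of `S ⊆ Q`, then there is an optimal covering of `S` by three congruent squares
in which at least one square is anchored at (shares) one of the four corners of `Q`. -/
theorem three_center_anchored (S : Finset (ℝ × ℝ)) (x1 x2 y1 y2 : ℝ)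
    (hx : x1 ≤ x2) (hy : y1 ≤ y2)
    (hS : ∀ p ∈ S, x1 ≤ p.1 ∧ p.1 ≤ x2 ∧ y1 ≤ p.2 ∧ p.2 ≤ y2)
    (hleft : ∃ p ∈ S, p.1 = x1) (hright : ∃ p ∈ S, p.1 = x2)
    (hbottom : ∃ p ∈ S, p.2 = y1) (htop : ∃ p ∈ S, p.2 = y2) :
    ∃ a1 a2 a3 : ℝ × ℝ,
      (∀ p ∈ S, p ∈ square a1 (opt3 S) ∨ p ∈ square a2 (opt3 S) ∨ p ∈ square a3 (opt3 S)) ∧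
      (a1 = (x1, y1) ∨ a1 = (x1, y2 - opt3 S) ∨
        a1 = (x2 - opt3 S, y1) ∨ a1 = (x2 - opt3 S, y2 - opt3 S)) :=
  three_center_anchored_general S x1 x2 y1 y2 hS hleft hright hbottom htop
end

section
/- Capacity bound in the capacitated clustering query: suppose a cluster C_i is a union of point sets S_Q ∩ σ over a family R_i of at most 8k^2 pairwise disjoint axis-aligned rectangles, where A_Q is a δ_Q-approximation of S_Q with δ_Q = δ/(16k^3), Σ_{σ ∈ R_i} |A_Q ∩ σ| <= U with U = (1 + δ/2)·α·|A_Q|/k, and α >= 1, 0 < δ. Then |C_i| <= (1 + δ)·α·|S_Q|/k. -/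
/-- The axis-aligned rectangle in `ℝ²` with corners `a` and `b`. -/
def Rect (a b : EuclideanSpace ℝ (Fin 2)) : Set (EuclideanSpace ℝ (Fin 2)) :=
  {p | ∀ i, a i ≤ p i ∧ p i ≤ b i}

/-- `A` is a `δ`-approximation of `P` with respect to axis-aligned rectangles. -/
def IsApprox (P A : Set (EuclideanSpace ℝ (Fin 2))) (δ : ℝ) : Prop :=
  A ⊆ P ∧ ∀ a b : EuclideanSpace ℝ (Fin 2),
    |((P ∩ Rect a b).ncard : ℝ) / P.ncard - ((A ∩ Rect a b).ncard : ℝ) / A.ncard| ≤ δ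

/-!
Each rectangle `σ` contains at most `|S_Q|·(|A_Q ∩ σ|/|A_Q| + δ_Q)` points of `S_Q`. Summing over
the at most `8k²` disjoint rectangles of the cluster, the capacity bound on `A_Q` contributes
`(1 + δ/2)·α·|S_Q|/k` and the approximation errors at most `8k²·δ/(16k³)·|S_Q| = δ·|S_Q|/(2k)`,
which is absorbed into `(δ/2)·α·|S_Q|/k` because `α ≥ 1`.
-/

open Finset Function

lemma Set.ncard_inter_iUnion_of_pairwise_disjoint {α ι : Type*} [Fintype ι] {S : Set α}
    (hS : S.Finite) {s : ι → Set α} (hs : Pairwise (Disjoint on s)) :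
    (S ∩ ⋃ j, s j).ncard = ∑ j, (S ∩ s j).ncard := by
  rw [Set.inter_iUnion, Set.ncard_iUnion_of_finite (fun j => hS.inter_of_left _)
    (fun i j hij => (hs hij).mono Set.inter_subset_right Set.inter_subset_right),
    finsum_eq_sum_of_fintype]

namespace IsApprox

variable {P A : Set (EuclideanSpace ℝ (Fin 2))} {δ : ℝ}

lemma ncard_inter_rect_le (h : IsApprox P A δ) (hP : P.Finite) (a b : EuclideanSpace ℝ (Fin 2)) :
    ((P ∩ Rect a b).ncard : ℝ) ≤ P.ncard * ((A ∩ Rect a b).ncard / A.ncard + δ) := by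
  rcases P.eq_empty_or_nonempty with rfl | hne
  · simp
  have hn : (0 : ℝ) < P.ncard := by exact_mod_cast hne.ncard_pos hP
  rw [← div_le_iff₀' hn]
  linarith [(abs_le.1 (h.2 a b)).2]

lemma ncard_inter_iUnion_rect_le {ι : Type*} [Fintype ι] (h : IsApprox P A δ) (hP : P.Finite)
    (a b : ι → EuclideanSpace ℝ (Fin 2))
    (hdisj : Pairwise fun j j' => Disjoint (Rect (a j) (b j)) (Rect (a j') (b j'))) :
    ((P ∩ ⋃ j, Rect (a j) (b j)).ncard : ℝ) ≤
      P.ncard * ((∑ j, ((A ∩ Rect (a j) (b j)).ncard : ℝ)) / A.ncard + Fintype.card ι * δ) := by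
  rw [Set.ncard_inter_iUnion_of_pairwise_disjoint hP hdisj, Nat.cast_sum]
  calc ∑ j, ((P ∩ Rect (a j) (b j)).ncard : ℝ)
      ≤ ∑ j, P.ncard * ((A ∩ Rect (a j) (b j)).ncard / A.ncard + δ) :=
        sum_le_sum fun j _ => h.ncard_inter_rect_le hP (a j) (b j)
    _ = _ := by
        rw [← mul_sum, sum_add_distrib, ← sum_div, sum_const, card_univ, nsmul_eq_mul]

end IsApprox

lemma mul_div_sixteen_mul_cube_le {c δ : ℝ} {k : ℕ} (hc : c ≤ 8 * k ^ 2) (hδ : 0 ≤ δ) :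
    c * (δ / (16 * k ^ 3)) ≤ δ / (2 * k) :=
  calc c * (δ / (16 * k ^ 3)) ≤ 8 * k ^ 2 * (δ / (16 * k ^ 3)) := by gcongr
    _ = δ / (2 * k) := by
        rcases eq_or_ne k 0 with rfl | hk
        · simp
        · field_simp; ring

lemma capacity_add_slack_le {δ α : ℝ} {k : ℕ} (hδ : 0 ≤ δ) (hα : 1 ≤ α) :
    (1 + δ / 2) * α / k + δ / (2 * k) ≤ (1 + δ) * α / k := by
  rw [← div_div, ← add_div]
  gcongr
  nlinarith

theorem capacitated_cluster_bound_general (k : ℕ) (δ α : ℝ)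
    (hδ : 0 < δ) (hα : 1 ≤ α)
    (SQ AQ : Set (EuclideanSpace ℝ (Fin 2)))
    (hfin : SQ.Finite)
    (happrox : IsApprox SQ AQ (δ / (16 * k ^ 3)))
    (ι : Type) [Fintype ι] (hm : Fintype.card ι ≤ 8 * k ^ 2)
    (a b : ι → EuclideanSpace ℝ (Fin 2))
    (hdisj : Pairwise fun j j' => Disjoint (Rect (a j) (b j)) (Rect (a j') (b j')))
    (hU : ∑ j, ((AQ ∩ Rect (a j) (b j)).ncard : ℝ) ≤ (1 + δ / 2) * α * AQ.ncard / k) :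
    ((SQ ∩ ⋃ j, Rect (a j) (b j)).ncard : ℝ) ≤ (1 + δ) * α * SQ.ncard / k := by
  have hα₀ : 0 ≤ α := by linarith
  have hsample : (∑ j, ((AQ ∩ Rect (a j) (b j)).ncard : ℝ)) / AQ.ncard ≤ (1 + δ / 2) * α / k :=
    div_le_of_le_mul₀ (by positivity) (by positivity) (hU.trans_eq (by ring))
  have herror : (Fintype.card ι : ℝ) * (δ / (16 * k ^ 3)) ≤ δ / (2 * k) :=
    mul_div_sixteen_mul_cube_le (by exact_mod_cast hm) hδ.le
  calc ((SQ ∩ ⋃ j, Rect (a j) (b j)).ncard : ℝ)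
      ≤ SQ.ncard * ((∑ j, ((AQ ∩ Rect (a j) (b j)).ncard : ℝ)) / AQ.ncard
          + Fintype.card ι * (δ / (16 * k ^ 3))) :=
        happrox.ncard_inter_iUnion_rect_le hfin a b hdisj
    _ ≤ SQ.ncard * ((1 + δ) * α / k) := by
        gcongr
        exact (add_le_add hsample herror).trans (capacity_add_slack_le hδ.le hα)
    _ = (1 + δ) * α * SQ.ncard / k := by ring

/-- Capacity bound in the capacitated clustering query: if the
cluster `C_i` is the union of `S_Q ∩ σ` over at most `8k²` pairwise disjoint
rectangles `σ`, `A_Q` is a `δ/(16k³)`-approximation of `S_Q`, and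
`Σ_σ |A_Q ∩ σ| ≤ (1 + δ/2)·α·|A_Q|/k` with `α ≥ 1`, `δ > 0`, then
`|C_i| ≤ (1 + δ)·α·|S_Q|/k`. -/
theorem capacitated_cluster_bound (k : ℕ) (hk : 2 ≤ k) (δ α : ℝ)
    (hδ : 0 < δ) (hα : 1 ≤ α)
    (SQ AQ : Set (EuclideanSpace ℝ (Fin 2)))
    (hfin : SQ.Finite) (hSne : SQ.Nonempty) (hAne : AQ.Nonempty)
    (happrox : IsApprox SQ AQ (δ / (16 * k ^ 3)))
    (ι : Type) [Fintype ι] (hm : Fintype.card ι ≤ 8 * k ^ 2)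
    (a b : ι → EuclideanSpace ℝ (Fin 2))
    (hdisj : Pairwise fun j j' => Disjoint (Rect (a j) (b j)) (Rect (a j') (b j')))
    (hU : ∑ j, ((AQ ∩ Rect (a j) (b j)).ncard : ℝ) ≤ (1 + δ / 2) * α * AQ.ncard / k) :
    ((SQ ∩ ⋃ j, Rect (a j) (b j)).ncard : ℝ) ≤ (1 + δ) * α * SQ.ncard / k :=
  capacitated_cluster_bound_general k δ α hδ hα SQ AQ hfin happrox ι hm a b hdisj hU
end
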